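/- Let G be a finite group and V a finite-dimensional complex representation of G which is faithful and contains a nonzero G-invariant vector, and let W be an irreducible finite-dimensional complex representation of G. Setting d(L) := dim_ℂ Hom_G(W, V^{⊗L}), one has lim_{L→∞} |G| · d(L) / (dim V)^L = dim W. In particular, if G is nontrivial (so dim V ≥ 2), then d(L) grows exponentially with L. -/

import Mathlib

/-! By character theory, `|G| · d(L) = ∑_g χ_W(g⁻¹) χ_V(g)^L`, the character of `V^{⊗L}` being
`χ_V^L`. For `g ≠ 1` the operator `ρV g` has finite order, so it is semisimple with eigenvalues on
the unit circle, and `1` is one of them because of the invariant vector. Not all eigenvalues are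
`1` since `ρV g ≠ 1`, so strict convexity of `ℂ` gives `‖χ_V(g)‖ < dim V`. After dividing by
`(dim V)^L` only the term `g = 1`, which is `dim W`, survives in the limit; the exponential lower
bound then holds with rate `dim V`, which is at least `2` for a faithful representation of a
nontrivial group with an invariant vector. -/

open scoped TensorProduct

/-- The space `Hom_G(W, V^{⊗L})` of `G`-equivariant linear maps from `W` to the `L`-fold
tensor power of `V` (with the diagonal `G`-action). -/
noncomputable def equivariantHom {G V W : Type*} [Group G]
    [AddCommGroup V] [Module ℂ V] [AddCommGroup W] [Module ℂ W]
    (ρV : Representation ℂ G V) (ρW : Representation ℂ G W) (L : ℕ) :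
    Submodule ℂ (W →ₗ[ℂ] (⨂[ℂ] _ : Fin L, V)) where
  carrier := { f | ∀ g : G,
    (PiTensorProduct.map fun _ : Fin L => ρV g) ∘ₗ f = f ∘ₗ ρW g }
  add_mem' := by
    intro f f' hf hf' g
    rw [LinearMap.comp_add, LinearMap.add_comp, hf g, hf' g]
  zero_mem' := by
    intro g
    rw [LinearMap.comp_zero, LinearMap.zero_comp]
  smul_mem' := by
    intro c f hf g
    rw [LinearMap.comp_smul, LinearMap.smul_comp, hf g]

open Module LinearMap Polynomial Filter Topology

theorem LinearMap.trace_piTensorProductMap {ι R : Type*} [Fintype ι] [CommRing R]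
    {M : ι → Type*} [∀ i, AddCommGroup (M i)] [∀ i, Module R (M i)] [∀ i, Module.Free R (M i)]
    [∀ i, Module.Finite R (M i)] (f : ∀ i, M i →ₗ[R] M i) :
    trace R (⨂[R] i, M i) (PiTensorProduct.map f) = ∏ i, trace R (M i) (f i) := by
  classical
  let b := fun i => Module.Free.chooseBasis R (M i)
  rw [trace_eq_matrix_trace R (Basis.piTensorProduct b)]
  simp [Matrix.trace, LinearMap.toMatrix_apply, trace_eq_matrix_trace R (b _), Finset.prod_univ_sum]

namespace Representation

variable {k G ι : Type*} [CommSemiring k] [Monoid G] {V : ι → Type*} [∀ i, AddCommMonoid (V i)]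
  [∀ i, Module k (V i)]

noncomputable def piTensorProduct (ρ : ∀ i, Representation k G (V i)) :
    Representation k G (⨂[k] i, V i) :=
  PiTensorProduct.mapMonoidHom.comp (MonoidHom.pi ρ)

@[simp]
theorem piTensorProduct_apply (ρ : ∀ i, Representation k G (V i)) (g : G) :
    piTensorProduct ρ g = PiTensorProduct.map fun i => ρ i g := rfl

end Representation

theorem Representation.char_piTensorProduct {k G ι : Type*} [Field k] [Monoid G] [Fintype ι]
    {V : ι → Type*} [∀ i, AddCommGroup (V i)] [∀ i, Module k (V i)]
    [∀ i, FiniteDimensional k (V i)] (ρ : ∀ i, Representation k G (V i)) (g : G) :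
    (piTensorProduct ρ).character g = ∏ i, (ρ i).character g :=
  trace_piTensorProductMap _

open Representation in
theorem equivariantHom_eq_invariants {G V W : Type*} [Group G]
    [AddCommGroup V] [Module ℂ V] [AddCommGroup W] [Module ℂ W]
    (ρV : Representation ℂ G V) (ρW : Representation ℂ G W) (L : ℕ) :
    equivariantHom ρV ρW L = (linHom ρW (piTensorProduct fun _ : Fin L => ρV)).invariants := by
  ext f
  change _ ↔ ∀ g : G, (piTensorProduct fun _ : Fin L => ρV) g ∘ₗ f ∘ₗ ρW g⁻¹ = f
  rw [mem_linHom_invariants_iff_isIntertwining, isIntertwiningMap_iff]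
  simp [equivariantHom, LinearMap.ext_iff, eq_comm]

open Representation in
theorem finrank_equivariantHom {G V W : Type*} [Group G] [Fintype G]
    [AddCommGroup V] [Module ℂ V] [FiniteDimensional ℂ V]
    [AddCommGroup W] [Module ℂ W] [FiniteDimensional ℂ W]
    (ρV : Representation ℂ G V) (ρW : Representation ℂ G W) (L : ℕ) :
    (finrank ℂ (equivariantHom ρV ρW L) : ℂ) =
      (Nat.card G : ℂ)⁻¹ * ∑ g : G, ρW.character g⁻¹ * ρV.character g ^ L := by
  have : Invertible (Nat.card G : ℂ) := invertibleOfNonzero (by simp)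
  rw [equivariantHom_eq_invariants, ← card_inv_mul_sum_char_eq_finrank]
  simp [char_piTensorProduct]

theorem Module.End.eq_one_of_isOfFinOrder_of_charpoly_eq {K V : Type*} [Field K] [CharZero K]
    [AddCommGroup V] [Module K V] [FiniteDimensional K V] {A : Module.End K V}
    (hA : IsOfFinOrder A) (hchar : A.charpoly = (X - 1) ^ finrank K V) : A = 1 := by
  obtain ⟨m, hm, hAm⟩ := hA.exists_pow_eq_one
  have hss : A.IsSemisimple := by
    refine isSemisimple_of_squarefree_aeval_eq_zero
      (separable_X_pow_sub_C (1 : K) (Nat.cast_ne_zero.2 hm.ne') one_ne_zero).squarefree ?_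
    simp [hAm]
  have hnil : IsNilpotent (A - 1) := ⟨finrank K V, by simpa [hchar] using aeval_self_charpoly A⟩
  have hss' : (A - 1).IsSemisimple := by
    simpa using (isSemisimple_sub_algebraMap_iff (μ := (1 : K))).2 hss
  exact sub_eq_zero.1 (eq_zero_of_isNilpotent_isSemisimple hnil hss')

theorem Multiset.norm_sum_lt_card {E : Type*} [NormedAddCommGroup E] [NormedSpace ℝ E]
    [StrictConvexSpace ℝ E] {s : Multiset E} (hs : ∀ x ∈ s, ‖x‖ = 1) {x y : E} (hx : x ∈ s)
    (hy : y ∈ s) (hxy : x ≠ y) : ‖s.sum‖ < Multiset.card s := by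
  classical
  obtain ⟨t, rfl⟩ : ∃ t, s = x ::ₘ y ::ₘ t :=
    ⟨(s.erase x).erase y, by rw [Multiset.cons_erase ((Multiset.mem_erase_of_ne hxy.symm).2 hy),
      Multiset.cons_erase hx]⟩
  have hx1 := hs x (by simp)
  have hy1 := hs y (by simp)
  have hxy_norm : ‖x + y‖ < ‖x‖ + ‖y‖ :=
    (norm_add_le x y).lt_of_ne fun h => hxy (eq_of_norm_eq_of_norm_add_eq (hx1.trans hy1.symm) h)
  have ht : ‖t.sum‖ ≤ Multiset.card t := by
    refine (norm_multiset_sum_le t).trans ?_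
    simpa using Multiset.sum_map_le_sum_map (f := norm) (g := fun _ => (1 : ℝ)) (s := t)
      fun z hz => (hs z (by simp [hz])).le
  calc ‖(x ::ₘ y ::ₘ t).sum‖ ≤ ‖x + y‖ + ‖t.sum‖ := by
        simpa [add_assoc] using norm_add_le (x + y) t.sum
    _ < Multiset.card (x ::ₘ y ::ₘ t) := by
        simp only [Multiset.card_cons]; push_cast; linarith

theorem Module.End.norm_trace_lt_finrank {V : Type*} [AddCommGroup V] [Module ℂ V]
    [FiniteDimensional ℂ V] {A : Module.End ℂ V} (hA : IsOfFinOrder A) (h1 : A.HasEigenvalue 1)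
    (hA1 : A ≠ 1) : ‖trace ℂ V A‖ < finrank ℂ V := by
  have hsplits : A.charpoly.Splits := IsAlgClosed.splits _
  have hcard : Multiset.card A.charpoly.roots = finrank ℂ V :=
    (splits_iff_card_roots.1 hsplits).trans (charpoly_natDegree A)
  have hroots : ∀ μ ∈ A.charpoly.roots, A.HasEigenvalue μ := fun μ hμ =>
    (hasEigenvalue_iff_isRoot_charpoly A μ).2 (isRoot_of_mem_roots hμ)
  have hnorm : ∀ μ ∈ A.charpoly.roots, ‖μ‖ = 1 := by
    intro μ hμ
    obtain ⟨m, hm, hAm⟩ := hA.exists_pow_eq_one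
    obtain ⟨v, hv⟩ := (hroots μ hμ).exists_hasEigenvector
    have hμm : μ ^ m = 1 := by
      have : (μ ^ m - 1) • v = 0 := by
        rw [sub_smul, ← hv.pow_apply, hAm, Module.End.one_apply, one_smul, sub_self]
      exact sub_eq_zero.1 ((smul_eq_zero.1 this).resolve_right hv.2)
    exact Complex.norm_eq_one_of_pow_eq_one hμm hm.ne'
  have h1root : (1 : ℂ) ∈ A.charpoly.roots :=
    (mem_roots (charpoly_monic A).ne_zero).2 ((hasEigenvalue_iff_isRoot_charpoly A 1).1 h1)
  by_cases hall : ∀ μ ∈ A.charpoly.roots, μ = 1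
  · refine absurd (eq_one_of_isOfFinOrder_of_charpoly_eq hA ?_) hA1
    rw [hsplits.eq_prod_roots_of_monic (charpoly_monic A), Multiset.eq_replicate.2 ⟨hcard, hall⟩]
    simp
  · push Not at hall
    obtain ⟨μ, hμ, hμ1⟩ := hall
    rw [trace_eq_sum_roots_charpoly_of_splits hsplits, ← hcard]
    exact Multiset.norm_sum_lt_card hnorm hμ h1root hμ1

namespace Representation

variable {G V : Type*} [Group G] [AddCommGroup V] [Module ℂ V] [FiniteDimensional ℂ V]
  {ρ : Representation ℂ G V}

theorem norm_character_lt_finrank [Finite G] (hρ : Function.Injective ρ) {v : V} (hv : v ≠ 0)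
    (hfix : ∀ g, ρ g v = v) {g : G} (hg : g ≠ 1) : ‖ρ.character g‖ < finrank ℂ V :=
  Module.End.norm_trace_lt_finrank (ρ.isOfFinOrder (isOfFinOrder_of_finite g))
    (Module.End.hasEigenvalue_of_hasEigenvector
      ⟨Module.End.mem_eigenspace_iff.2 (by simpa using hfix g), hv⟩)
    fun h => hg (hρ (h.trans (map_one ρ).symm))

theorem two_le_finrank_of_injective [Nontrivial G] (hρ : Function.Injective ρ) {v : V}
    (hv : v ≠ 0) (hfix : ∀ g, ρ g v = v) : 2 ≤ finrank ℂ V := by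
  obtain ⟨g, hg⟩ := exists_ne (1 : G)
  have hpos : 0 < finrank ℂ V := finrank_pos_iff_exists_ne_zero.2 ⟨v, hv⟩
  have hne : finrank ℂ V ≠ 1 := by
    intro h1
    refine hg (hρ (LinearMap.ext fun w => ?_))
    obtain ⟨c, rfl⟩ := (finrank_eq_one_iff_of_nonzero' v hv).1 h1 w
    simp [hfix]
  omega

end Representation

theorem tendsto_sum_mul_pow_of_norm_lt_one {ι 𝕜 : Type*} [Fintype ι] [NormedField 𝕜]
    (a z : ι → 𝕜) {i₀ : ι} (h₀ : z i₀ = 1) (h : ∀ i ≠ i₀, ‖z i‖ < 1) :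
    Tendsto (fun L : ℕ => ∑ i, a i * z i ^ L) atTop (𝓝 (a i₀)) := by
  classical
  have hterm (i : ι) :
      Tendsto (fun L : ℕ => a i * z i ^ L) atTop (𝓝 (if i = i₀ then a i₀ else 0)) := by
    split_ifs with hi
    · simp [hi, h₀]
    · simpa using (tendsto_pow_atTop_nhds_zero_of_norm_lt_one (h i hi)).const_mul (a i)
  simpa using tendsto_finsetSum Finset.univ fun i _ => hterm i

theorem tendsto_card_mul_finrank_equivariantHom_div_pow {G V W : Type*} [Group G] [Finite G]
    [AddCommGroup V] [Module ℂ V] [FiniteDimensional ℂ V]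
    [AddCommGroup W] [Module ℂ W] [FiniteDimensional ℂ W]
    (ρV : Representation ℂ G V) (ρW : Representation ℂ G W) (hρV : Function.Injective ρV)
    {v : V} (hv : v ≠ 0) (hfix : ∀ g, ρV g v = v) :
    Tendsto (fun L : ℕ => (Nat.card G : ℝ) * (finrank ℂ (equivariantHom ρV ρW L) : ℝ) /
      (finrank ℂ V : ℝ) ^ L) atTop (𝓝 (finrank ℂ W : ℝ)) := by
  have := Fintype.ofFinite G
  have hn : 0 < finrank ℂ V := finrank_pos_iff_exists_ne_zero.2 ⟨v, hv⟩
  have hseq (L : ℕ) :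
      (((Nat.card G : ℝ) * finrank ℂ (equivariantHom ρV ρW L) / (finrank ℂ V : ℝ) ^ L : ℝ) : ℂ) =
        ∑ g, ρW.character g⁻¹ * (ρV.character g / finrank ℂ V) ^ L := by
    push_cast
    rw [finrank_equivariantHom, ← mul_assoc, mul_inv_cancel₀ (by simp), one_mul, Finset.sum_div]
    simp [div_pow, mul_div_assoc]
  rw [← tendsto_ofReal_iff]
  simp_rw [hseq]
  convert tendsto_sum_mul_pow_of_norm_lt_one _ _ (i₀ := (1 : G)) ?_ ?_
  · simp
  · simp [hn.ne']
  · intro g hg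
    rw [norm_div, div_lt_one (by simpa using hn)]
    simpa using ρV.norm_character_lt_finrank hρV hv hfix hg

theorem eventually_mul_pow_le_of_tendsto_div_pow {a : ℕ → ℝ} {r c ℓ : ℝ} (hr : 0 < r)
    (hc : c < ℓ) (h : Tendsto (fun L => a L / r ^ L) atTop (𝓝 ℓ)) :
    ∀ᶠ L in atTop, c * r ^ L ≤ a L :=
  (h.eventually (eventually_gt_nhds hc)).mono fun L hL =>
    ((lt_div_iff₀ (pow_pos hr L)).1 hL).le

theorem equivariantHom_tensorPower_dim_asymptotics_general
    {G V W : Type*} [Group G] [Finite G]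
    [AddCommGroup V] [Module ℂ V] [FiniteDimensional ℂ V]
    [AddCommGroup W] [Module ℂ W] [FiniteDimensional ℂ W]
    (ρV : Representation ℂ G V) (ρW : Representation ℂ G W)
    (hfaithful : Function.Injective ρV)
    (hinv : ∃ v : V, v ≠ 0 ∧ ∀ g : G, ρV g v = v)
    (hWnz : Nontrivial W) :
    Filter.Tendsto
      (fun L : ℕ => (Nat.card G : ℝ) * (Module.finrank ℂ (equivariantHom ρV ρW L) : ℝ) /
        (Module.finrank ℂ V : ℝ) ^ L)
      Filter.atTop (nhds (Module.finrank ℂ W : ℝ)) ∧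
    (Nontrivial G →
      ∃ c r : ℝ, 0 < c ∧ 1 < r ∧ ∀ᶠ L : ℕ in Filter.atTop,
        c * r ^ L ≤ (Module.finrank ℂ (equivariantHom ρV ρW L) : ℝ)) := by
  obtain ⟨v, hv, hfix⟩ := hinv
  have hlim := tendsto_card_mul_finrank_equivariantHom_div_pow ρV ρW hfaithful hv hfix
  refine ⟨hlim, fun _ => ?_⟩
  have hG : (0 : ℝ) < Nat.card G := by exact_mod_cast Nat.card_pos
  have hW : (0 : ℝ) < finrank ℂ W := by exact_mod_cast finrank_pos
  have hV : (2 : ℝ) ≤ finrank ℂ V := by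
    exact_mod_cast ρV.two_le_finrank_of_injective hfaithful hv hfix
  refine ⟨finrank ℂ W / 2 / Nat.card G, finrank ℂ V, by positivity, by linarith, ?_⟩
  filter_upwards [eventually_mul_pow_le_of_tendsto_div_pow (by linarith) (half_lt_self hW) hlim]
    with L hL
  rw [div_mul_eq_mul_div, div_le_iff₀ hG]
  linarith

/-- If `V` is a faithful finite-dimensional complex representation of a finite group `G`
containing a nonzero invariant vector and `W` is an irreducible finite-dimensional complex
representation of `G`, then `|G| * d(L) / (dim V)^L → dim W` as `L → ∞`, where
`d(L) = dim Hom_G(W, V^{⊗L})`.  In particular, if `G` is nontrivial, `d(L)` grows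
exponentially with `L`. -/
theorem equivariantHom_tensorPower_dim_asymptotics
    {G V W : Type*} [Group G] [Finite G]
    [AddCommGroup V] [Module ℂ V] [FiniteDimensional ℂ V]
    [AddCommGroup W] [Module ℂ W] [FiniteDimensional ℂ W]
    (ρV : Representation ℂ G V) (ρW : Representation ℂ G W)
    (hfaithful : Function.Injective ρV)
    (hinv : ∃ v : V, v ≠ 0 ∧ ∀ g : G, ρV g v = v)
    (hWnz : Nontrivial W)
    (hWirr : ∀ p : Submodule ℂ W, (∀ (g : G), ∀ w ∈ p, ρW g w ∈ p) → p = ⊥ ∨ p = ⊤) :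
    Filter.Tendsto
      (fun L : ℕ => (Nat.card G : ℝ) * (Module.finrank ℂ (equivariantHom ρV ρW L) : ℝ) /
        (Module.finrank ℂ V : ℝ) ^ L)
      Filter.atTop (nhds (Module.finrank ℂ W : ℝ)) ∧
    (Nontrivial G →
      ∃ c r : ℝ, 0 < c ∧ 1 < r ∧ ∀ᶠ L : ℕ in Filter.atTop,
        c * r ^ L ≤ (Module.finrank ℂ (equivariantHom ρV ρW L) : ℝ)) :=
  equivariantHom_tensorPower_dim_asymptotics_general ρV ρW hfaithful hinv hWnz
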